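/- arXiv:1007.2783 — 3 statements merged into one kernel-verified Lean document; each statement's English description precedes it below -/
import Mathlib

section
/- Fix a nonnegative integer k and a finite set C of clocks. The region equivalence ≅_k (as defined by agreement of capped integral parts, ordering and equality of fractional parts, and zero-ness of fractional parts) has finitely many equivalence classes on the set of valuations ν : C → ℝ≥0. -/
def regionEquiv (k : ℕ) {C : Type*} (ν ν' : C → ℝ) : Prop :=
  (∀ x, ⌊ν x⌋ = ⌊ν' x⌋ ∨ (ν x > (k : ℝ) ∧ ν' x > (k : ℝ))) ∧
  (∀ x y,
    (Int.fract (ν x) < Int.fract (ν y) ↔ Int.fract (ν' x) < Int.fract (ν' y)) ∧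
    (Int.fract (ν x) = Int.fract (ν y) ↔ Int.fract (ν' x) = Int.fract (ν' y))) ∧
  (∀ x, Int.fract (ν x) = 0 ↔ Int.fract (ν' x) = 0)

theorem Quot.finite_of_map_eq_imp_rel {α β : Type*} [Finite β] {r : α → α → Prop} (f : α → β)
    (h : ∀ a b, f a = f b → r a b) : Finite (Quot r) := by
  have : Finite (Quot fun a b => f a = f b) :=
    Finite.of_injective (Quot.lift f fun _ _ => id) <| by
      rintro ⟨a⟩ ⟨b⟩ hab
      exact Quot.sound hab
  refine Finite.of_surjective (Quot.factor _ _ h) ?_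
  rintro ⟨a⟩
  exact ⟨Quot.mk _ a, rfl⟩

lemma Int.floor_eq_of_floor_le_of_forall_floor_eq_iff {R : Type*} [Ring R] [LinearOrder R]
    [FloorRing R] {k : ℕ} {s t : R} (hs : 0 ≤ s) (hsk : ⌊s⌋ ≤ k)
    (h : ∀ n : Fin (k + 1), ⌊s⌋ = n ↔ ⌊t⌋ = n) : ⌊s⌋ = ⌊t⌋ := by
  have hs₀ : 0 ≤ ⌊s⌋ := Int.floor_nonneg.2 hs
  have hn : ⌊s⌋ = ((⟨⌊s⌋.toNat, by omega⟩ : Fin (k + 1)) : ℕ) := by simp [hs₀]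
  rw [hn, ← (h _).1 hn]

lemma Int.floor_eq_or_lt_of_forall_floor_eq_iff {R : Type*} [Ring R] [LinearOrder R]
    [IsStrictOrderedRing R] [FloorRing R] {k : ℕ} {s t : R} (hs : 0 ≤ s) (ht : 0 ≤ t)
    (h : ∀ n : Fin (k + 1), ⌊s⌋ = n ↔ ⌊t⌋ = n) : ⌊s⌋ = ⌊t⌋ ∨ (k < s ∧ k < t) := by
  by_cases hsk : ⌊s⌋ ≤ k
  · exact .inl (floor_eq_of_floor_le_of_forall_floor_eq_iff hs hsk h)
  by_cases htk : ⌊t⌋ ≤ k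
  · exact .inl (floor_eq_of_floor_le_of_forall_floor_eq_iff ht htk fun n => (h n).symm).symm
  rw [Int.floor_le_iff, not_lt] at hsk htk
  push_cast at hsk htk
  exact .inr ⟨(lt_add_one _).trans_le hsk, (lt_add_one _).trans_le htk⟩

/-- Integral parts enter only through the predicates `⌊ν x⌋ = n` for `n ≤ k`, so the signature
lives in a finite type; forgetting larger integral parts is harmless since `k < ⌊ν x⌋` forces
`k < ν x`. -/
def regionSignature (k : ℕ) {C : Type*} (ν : C → ℝ) :
    (C → Fin (k + 1) → Prop) × (C → C → Prop) × (C → C → Prop) × (C → Prop) :=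
  (fun x n => ⌊ν x⌋ = n, fun x y => Int.fract (ν x) < Int.fract (ν y),
    fun x y => Int.fract (ν x) = Int.fract (ν y), fun x => Int.fract (ν x) = 0)

lemma regionEquiv_of_regionSignature_eq {k : ℕ} {C : Type*} {ν ν' : C → ℝ} (hν : ∀ x, 0 ≤ ν x)
    (hν' : ∀ x, 0 ≤ ν' x) (h : regionSignature k ν = regionSignature k ν') :
    regionEquiv k ν ν' := by
  simp only [regionSignature, Prod.mk.injEq, funext_iff] at h
  obtain ⟨hfloor, hlt, heq, hzero⟩ := h
  exact ⟨fun x => Int.floor_eq_or_lt_of_forall_floor_eq_iff (hν x) (hν' x) fun n =>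
    (hfloor x n).to_iff, fun x y => ⟨(hlt x y).to_iff, (heq x y).to_iff⟩, fun x => (hzero x).to_iff⟩

theorem regionEquiv_finite_index (k : ℕ) (C : Type*) [Fintype C] :
    Finite (Quot (fun ν ν' : {f : C → ℝ // ∀ x, 0 ≤ f x} =>
      regionEquiv k ν.1 ν'.1)) :=
  Quot.finite_of_map_eq_imp_rel (fun ν => regionSignature k ν.1) fun ν ν' h =>
    regionEquiv_of_regionSignature_eq ν.2 ν'.2 h
end

section
/- If ν ≅_k ν' (region equivalence with constant k) and Y is any subset of the clocks, then ν[Y:=0] ≅_k ν'[Y:=0], where ν[Y:=0] is the valuation obtained by setting all clocks in Y to 0 and leaving the others unchanged. -/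
namespace regionEquiv

variable {k : ℕ} {C D : Type*} {ν ν' : C → ℝ}

theorem fract_pos_iff (h : regionEquiv k ν ν') (x : C) :
    0 < Int.fract (ν x) ↔ 0 < Int.fract (ν' x) := by
  rw [(Int.fract_nonneg _).lt_iff_ne, (Int.fract_nonneg _).lt_iff_ne, ne_comm, ne_comm (a := 0)]
  exact not_congr (h.2.2 x)

theorem comp (h : regionEquiv k ν ν') (f : D → C) : regionEquiv k (ν ∘ f) (ν' ∘ f) :=
  ⟨fun x => h.1 (f x), fun x y => h.2.1 (f x) (f y), fun x => h.2.2 (f x)⟩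

theorem optionElim_zero (h : regionEquiv k ν ν') :
    regionEquiv k (fun o : Option C => o.elim 0 ν) (fun o : Option C => o.elim 0 ν') := by
  refine ⟨?_, ?_, ?_⟩
  · rintro (_ | x)
    · exact Or.inl rfl
    · exact h.1 x
  · rintro (_ | x) (_ | y) <;>
      simp only [Option.elim_none, Option.elim_some, Int.fract_zero, iff_self, and_self]
    · exact ⟨h.fract_pos_iff y, by rw [eq_comm, h.2.2, eq_comm]⟩
    · exact ⟨by simp only [(Int.fract_nonneg _).not_gt], h.2.2 x⟩
    · exact h.2.1 x y
  · rintro (_ | x)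
    · exact Iff.rfl
    · exact h.2.2 x

end regionEquiv

theorem regionEquiv_reset_general (k : ℕ) (C : Type*) [DecidableEq C]
    (ν ν' : C → ℝ)
    (h : regionEquiv k ν ν') (Y : Finset C) :
    regionEquiv k (fun x => if x ∈ Y then 0 else ν x)
      (fun x => if x ∈ Y then 0 else ν' x) := by
  -- Resetting `Y` factors through the clock set `Option C`, sending `Y` to a fresh zero clock.
  have hreset : ∀ μ : C → ℝ, (fun x => if x ∈ Y then 0 else μ x)
      = (fun o : Option C => o.elim 0 μ) ∘ fun x => if x ∈ Y then none else some x := by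
    intro μ
    funext x
    simp only [Function.comp_apply]
    split_ifs <;> rfl
  rw [hreset ν, hreset ν']
  exact h.optionElim_zero.comp _

theorem regionEquiv_reset (k : ℕ) (C : Type*) [Fintype C] [DecidableEq C]
    (ν ν' : C → ℝ) (hν : ∀ x, 0 ≤ ν x) (hν' : ∀ x, 0 ≤ ν' x)
    (h : regionEquiv k ν ν') (Y : Finset C) :
    regionEquiv k (fun x => if x ∈ Y then 0 else ν x)
      (fun x => if x ∈ Y then 0 else ν' x) :=
  regionEquiv_reset_general k C ν ν' h Y
end

section
/- If ν ≅_k ν' (region equivalence with constant k), then for every guard of the form x ⋈ c with c ≤ k a natural number and ⋈ ∈ {<, ≤, ≥, >}: ν satisfies x ⋈ c if and only if ν' satisfies x ⋈ c. -/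
namespace Int

variable {R : Type*} [Ring R] [LinearOrder R] [FloorRing R] {a b : R}

theorem lt_intCast_iff_of_floor_eq (h : ⌊a⌋ = ⌊b⌋) (n : ℤ) : a < n ↔ b < n := by
  rw [← floor_lt, h, floor_lt]

variable [IsOrderedRing R]

theorem ceil_eq_ceil_of_floor_eq (h : ⌊a⌋ = ⌊b⌋) (hfract : fract a = 0 ↔ fract b = 0) :
    ⌈a⌉ = ⌈b⌉ := by
  by_cases ha : fract a = 0
  · obtain ⟨m, rfl⟩ := fract_eq_zero_iff.mp ha
    obtain ⟨n, rfl⟩ := fract_eq_zero_iff.mp (hfract.mp ha)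
    simpa using h
  · have hb : fract b ≠ 0 := mt hfract.mpr ha
    rw [(ceil_eq_floor_add_one_iff_notMem a).mpr (fract_ne_zero_iff.mp ha),
      (ceil_eq_floor_add_one_iff_notMem b).mpr (fract_ne_zero_iff.mp hb), h]

theorem le_intCast_iff_of_floor_eq (h : ⌊a⌋ = ⌊b⌋) (hfract : fract a = 0 ↔ fract b = 0)
    (n : ℤ) : a ≤ n ↔ b ≤ n := by
  rw [← ceil_le, ceil_eq_ceil_of_floor_eq h hfract, ceil_le]

end Int

theorem regionEquiv_preserves_guards_general (k : ℕ) (C : Type*)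
    (ν ν' : C → ℝ)
    (h : regionEquiv k ν ν') (c : ℕ) (hc : c ≤ k) (x : C) :
    (ν x < c ↔ ν' x < c) ∧ (ν x ≤ c ↔ ν' x ≤ c) ∧
    (ν x ≥ c ↔ ν' x ≥ c) ∧ (ν x > c ↔ ν' x > c) := by
  obtain ⟨hfloor, -, hfract⟩ := h
  have hlt_le : (ν x < c ↔ ν' x < c) ∧ (ν x ≤ c ↔ ν' x ≤ c) := by
    rcases hfloor x with hx | ⟨hx, hx'⟩
    · exact ⟨mod_cast Int.lt_intCast_iff_of_floor_eq hx c,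
        mod_cast Int.le_intCast_iff_of_floor_eq hx (hfract x) c⟩
    · have hck : (c : ℝ) ≤ k := mod_cast hc
      exact ⟨iff_of_false (by linarith) (by linarith), iff_of_false (by linarith) (by linarith)⟩
  obtain ⟨hlt, hle⟩ := hlt_le
  exact ⟨hlt, hle, by simpa only [ge_iff_le, not_lt] using hlt.not,
    by simpa only [gt_iff_lt, not_le] using hle.not⟩

theorem regionEquiv_preserves_guards (k : ℕ) (C : Type*) [Fintype C]
    (ν ν' : C → ℝ) (hν : ∀ x, 0 ≤ ν x) (hν' : ∀ x, 0 ≤ ν' x)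
    (h : regionEquiv k ν ν') (c : ℕ) (hc : c ≤ k) (x : C) :
    (ν x < c ↔ ν' x < c) ∧ (ν x ≤ c ↔ ν' x ≤ c) ∧
    (ν x ≥ c ↔ ν' x ≥ c) ∧ (ν x > c ↔ ν' x > c) :=
  regionEquiv_preserves_guards_general k C ν ν' h c hc x
end
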